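/- If f is an orientation reversing permutation of a finite affine point set in general position on S², then f ∘ f is the identity. -/

import Mathlib

open scoped RealInnerProductSpace

noncomputable section

abbrev E3 := EuclideanSpace ℝ (Fin 3)

/-- Determinant of the 3×3 matrix whose rows are `p`, `q`, `r`. -/
def det3 (p q r : E3) : ℝ := Matrix.det (Matrix.of ![fun i => p i, fun i => q i, fun i => r i])

/-- The orientation `sgn(p,q,r)` of a triple of points: the sign of `det3 p q r`. -/
def sgn3 (p q r : E3) : ℝ := Real.sign (det3 p q r)

/-- An affine set: a finite subset of the unit sphere contained in an open hemisphere. -/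
def IsAffineSet (A : Set E3) : Prop :=
  A.Finite ∧ A ⊆ Metric.sphere (0 : E3) 1 ∧ ∃ v : E3, ∀ p ∈ A, 0 < ⟪v, p⟫

/-- General position for an affine set: no three of its points are coplanar with the origin. -/
def GenPos (A : Set E3) : Prop :=
  ∀ p ∈ A, ∀ q ∈ A, ∀ r ∈ A, p ≠ q → p ≠ r → q ≠ r → det3 p q r ≠ 0

/-!
The signs `det3 p q r` of an affine set behave like the orientations of a planar point set in
general position (project centrally from the hemisphere onto a plane). Call `p → q` a hull edge
when every other point lies strictly to the left of it. The hull vertices form a single cycle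
under the successor map along hull edges, since a second cycle would be enclosed by the first.
An orientation-reversing `f` sends a hull edge `p → q` to the hull edge `f q → f p`; hence it
preserves the hull and conjugates the successor map to its inverse, and such a map of a cycle is a
reflection, so `f ∘ f` fixes every hull vertex. Removing the hull and inducting on the number of
points handles the rest of the set.
-/

open Set

lemma det3_eq (p q r : E3) : det3 p q r =
    p 0 * q 1 * r 2 - p 0 * q 2 * r 1 - p 1 * q 0 * r 2 + p 1 * q 2 * r 0
      + p 2 * q 0 * r 1 - p 2 * q 1 * r 0 := by
  simp [det3, Matrix.det_fin_three]

lemma det3_rotate (p q r : E3) : det3 q r p = det3 p q r := by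
  simp only [det3_eq]; ring

lemma det3_swap_left (p q r : E3) : det3 q p r = -det3 p q r := by
  simp only [det3_eq]; ring

lemma det3_swap_right (p q r : E3) : det3 p r q = -det3 p q r := by
  simp only [det3_eq]; ring

lemma det3_self_left (p r : E3) : det3 p p r = 0 := by
  simp only [det3_eq]; ring

lemma det3_self_right (p q : E3) : det3 p q q = 0 := by
  simp only [det3_eq]; ring

lemma det3_self_outer (p q : E3) : det3 p q p = 0 := by
  simp only [det3_eq]; ring

lemma det3_smul (a b c : ℝ) (p q r : E3) :
    det3 (a • p) (b • q) (c • r) = a * b * c * det3 p q r := by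
  simp only [det3_eq, PiLp.smul_apply, smul_eq_mul]; ring

/-- Cramer's rule. -/
lemma det3_smul_eq (x y z w : E3) :
    det3 x y z • w = det3 w y z • x + det3 x w z • y + det3 x y w • z := by
  ext i; fin_cases i <;> simp [det3_eq] <;> ring

lemma det3_mul_det3 (p q w x y z : E3) :
    det3 p q w * det3 x y z =
      det3 w y z * det3 p q x + det3 x w z * det3 p q y + det3 x y w * det3 p q z := by
  simp only [det3_eq]; ring

lemma det3_neg_of_sgn3_eq_neg {p q r p' q' r' : E3} (h : sgn3 p' q' r' = -sgn3 p q r)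
    (hpos : 0 < det3 p q r) : det3 p' q' r' < 0 := by
  rw [sgn3, sgn3, Real.sign_of_pos hpos] at h
  rcases lt_trichotomy (det3 p' q' r') 0 with hlt | heq | hgt
  · exact hlt
  · rw [heq, Real.sign_zero] at h; norm_num at h
  · rw [Real.sign_of_pos hgt] at h; norm_num at h

lemma exists_mem_Ico_and_not_succ {P : ℕ → Prop} {a b : ℕ} (hab : a ≤ b) (ha : P a)
    (hb : ¬P b) : ∃ j ∈ Ico a b, P j ∧ ¬P (j + 1) := by
  induction b, hab using Nat.le_induction with
  | base => exact absurd ha hb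
  | succ b hab ih =>
    by_cases h : P b
    · exact ⟨b, ⟨hab, b.lt_succ_self⟩, h, hb⟩
    · obtain ⟨j, ⟨haj, hjb⟩, hj⟩ := ih h
      exact ⟨j, ⟨haj, hjb.trans b.lt_succ_self⟩, hj⟩

lemma exists_pos_iterate_eq_self_of_injOn {α : Type*} {s : α → α} {H : Set α} (hH : H.Finite)
    (hmaps : MapsTo s H H) (hinj : InjOn s H) {p : α} (hp : p ∈ H) :
    ∃ m, 0 < m ∧ s^[m] p = p := by
  obtain ⟨i, j, hij, he⟩ :=
    hH.exists_lt_map_eq_of_forall_mem (f := fun n => s^[n] p) (fun n => hmaps.iterate n hp)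
  refine ⟨j - i, Nat.sub_pos_of_lt hij, hinj.iterate hmaps i (hmaps.iterate _ hp) hp ?_⟩
  rw [← Function.iterate_add_apply, Nat.add_sub_cancel' hij.le]
  exact he.symm

def IsOrientationReversing (A : Set E3) (f : E3 → E3) : Prop :=
  ∀ p ∈ A, ∀ q ∈ A, ∀ r ∈ A, sgn3 (f p) (f q) (f r) = -sgn3 p q r

structure IsHullEdge (A : Set E3) (p q : E3) : Prop where
  left_mem : p ∈ A
  right_mem : q ∈ A
  ne : p ≠ q
  det3_pos : ∀ r ∈ A, r ≠ p → r ≠ q → 0 < det3 p q r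

/-- By `det3_smul_eq`, the three conditions say that `p` is a positive combination of `x`, `y`
and `z`: the points of `hullVertices A` are the vertices of the convex cone spanned by `A`. -/
def hullVertices (A : Set E3) : Set E3 :=
  {p ∈ A | ¬∃ x ∈ A, ∃ y ∈ A, ∃ z ∈ A, 0 < det3 p x y ∧ 0 < det3 p y z ∧ 0 < det3 p z x}

section Hull

variable {A : Set E3} {f : E3 → E3} {p p' q q' r w x y z : E3}

namespace IsHullEdge

lemma det3_nonneg (h : IsHullEdge A p q) (hr : r ∈ A) : 0 ≤ det3 p q r := by
  by_cases hrp : r = p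
  · rw [hrp, det3_self_outer]
  by_cases hrq : r = q
  · rw [hrq, det3_self_right]
  exact (h.det3_pos r hr hrp hrq).le

lemma eq_of_left (h : IsHullEdge A p q) (h' : IsHullEdge A p q') : q = q' := by
  by_contra hne
  have := h.det3_pos q' h'.right_mem h'.ne.symm (Ne.symm hne)
  have := h'.det3_pos q h.right_mem h.ne.symm hne
  rw [det3_swap_right] at this
  linarith

lemma eq_of_right (h : IsHullEdge A p q) (h' : IsHullEdge A p' q) : p = p' := by
  by_contra hne
  have := h.det3_pos p' h'.left_mem (Ne.symm hne) h'.ne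
  have := h'.det3_pos p h.left_mem hne h.ne
  rw [← det3_rotate, det3_swap_left] at this
  linarith

/-- A point in the open cone over a triangle of `A` cannot lie on a supporting plane. -/
lemma mem_hullVertices (h : IsHullEdge A p q) (hw : w ∈ A) (hpqw : det3 p q w = 0) :
    w ∈ hullVertices A := by
  refine ⟨hw, ?_⟩
  rintro ⟨x, hx, y, hy, z, hz, hxy, hyz, hzx⟩
  have key := det3_mul_det3 p q w x y z
  rw [hpqw, zero_mul, ← det3_rotate x w z, det3_rotate w x y] at key
  have on_line : ∀ r ∈ A, ∀ c : ℝ, 0 < c → c * det3 p q r ≤ 0 → r = p ∨ r = q := by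
    intro r hr c hc hle
    by_contra! hne
    exact (mul_pos hc (h.det3_pos r hr hne.1 hne.2)).not_ge hle
  have hx0 := mul_nonneg hyz.le (h.det3_nonneg hx)
  have hy0 := mul_nonneg hzx.le (h.det3_nonneg hy)
  have hz0 := mul_nonneg hxy.le (h.det3_nonneg hz)
  rcases on_line x hx _ hyz (by linarith) with rfl | rfl <;>
  rcases on_line y hy _ hzx (by linarith) with rfl | rfl <;>
  rcases on_line z hz _ hxy (by linarith) with rfl | rfl <;>
  simp [det3_self_right] at hxy hyz hzx

lemma left_mem_hullVertices (h : IsHullEdge A p q) : p ∈ hullVertices A :=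
  h.mem_hullVertices h.left_mem (det3_self_outer p q)

lemma right_mem_hullVertices (h : IsHullEdge A p q) : q ∈ hullVertices A :=
  h.mem_hullVertices h.right_mem (det3_self_right p q)

lemma map (hbij : BijOn f A A) (hrev : IsOrientationReversing A f)
    (h : IsHullEdge A p q) : IsHullEdge A (f q) (f p) where
  left_mem := hbij.mapsTo h.right_mem
  right_mem := hbij.mapsTo h.left_mem
  ne := fun he => h.ne (hbij.injOn h.right_mem h.left_mem he).symm
  det3_pos := by
    intro r' hr' hrq hrp
    obtain ⟨r, hr, rfl⟩ := hbij.surjOn hr'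
    have hneg := det3_neg_of_sgn3_eq_neg (hrev p h.left_mem q h.right_mem r hr)
      (h.det3_pos r hr (fun he => hrp (congrArg f he)) (fun he => hrq (congrArg f he)))
    rw [det3_swap_left]
    linarith

end IsHullEdge

lemma ne_of_det3_ne_zero (h : det3 p q r ≠ 0) : p ≠ q ∧ p ≠ r ∧ q ≠ r := by
  refine ⟨?_, ?_, ?_⟩ <;> rintro rfl
  exacts [h (det3_self_left _ _), h (det3_self_outer _ _), h (det3_self_right _ _)]

lemma det3_pos_trans_of_mem_hullVertices (hgp : GenPos A) (hp : p ∈ hullVertices A)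
    (hx : x ∈ A) (hy : y ∈ A) (hz : z ∈ A) (hxy : 0 < det3 p x y) (hyz : 0 < det3 p y z) :
    0 < det3 p x z := by
  obtain ⟨hpx, -, -⟩ := ne_of_det3_ne_zero hxy.ne'
  obtain ⟨-, hpz, -⟩ := ne_of_det3_ne_zero hyz.ne'
  have hxz : x ≠ z := by
    rintro rfl
    rw [det3_swap_right] at hyz
    linarith
  refine lt_of_le_of_ne (not_lt.1 fun hneg => hp.2 ⟨x, hx, y, hy, z, hz, hxy, hyz, ?_⟩)
    (hgp p hp.1 x hx z hz hpx hpz hxz).symm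
  rw [det3_swap_right]
  linarith

/-- The successor of `p` is the first point of `A \ {p}` in the angular order around `p`,
which is a strict order because `p` is a hull vertex. -/
lemma exists_isHullEdge (hfin : A.Finite) (hgp : GenPos A) (hp : p ∈ hullVertices A)
    (hx : x ∈ A) (hxp : x ≠ p) : ∃ q, IsHullEdge A p q := by
  let S := A \ {p}
  have : Finite S := (hfin.subset sdiff_subset).to_subtype
  let before : S → S → Prop := fun a b => 0 < det3 p a b
  have : IsTrans S before :=
    ⟨fun a b c hab hbc => det3_pos_trans_of_mem_hullVertices hgp hp a.2.1 b.2.1 c.2.1 hab hbc⟩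
  have : Std.Irrefl before := ⟨fun a h => by simp [before, det3_self_right] at h⟩
  obtain ⟨⟨q, hqA, hqp⟩, -, hmin⟩ :=
    (Finite.wellFounded_of_trans_of_irrefl before).has_min univ ⟨⟨x, hx, hxp⟩, trivial⟩
  have hqp : q ≠ p := hqp
  refine ⟨q, hp.1, hqA, hqp.symm, fun r hr hrp hrq => ?_⟩
  refine lt_of_le_of_ne ?_ (hgp p hp.1 q hqA r hr hqp.symm (Ne.symm hrp) (Ne.symm hrq)).symm
  have := hmin ⟨r, hr, hrp⟩ trivial
  simp only [before, not_lt] at this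
  rw [det3_swap_right] at this
  linarith

def hullSucc (A : Set E3) (p : E3) : E3 := Classical.epsilon (IsHullEdge A p)

lemma isHullEdge_hullSucc (hfin : A.Finite) (hgp : GenPos A) (hnt : A.Nontrivial)
    (hp : p ∈ hullVertices A) : IsHullEdge A p (hullSucc A p) :=
  let ⟨_, hx, hxp⟩ := hnt.exists_ne p
  Classical.epsilon_spec (exists_isHullEdge hfin hgp hp hx hxp)

/-- The triangles `c 0, c j, c (j + 1)` fan out the closed chain; the first sign change of
`det3 (c 0) (c j) w` locates `w` in one of them. -/
lemma notMem_hullVertices_of_cycle (hgp : GenPos A) {c : ℕ → E3} {m : ℕ} (hm : 0 < m)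
    (hcm : c m = c 0) (hedge : ∀ j, IsHullEdge A (c j) (c (j + 1))) (hw : w ∈ A)
    (hwc : ∀ j, w ≠ c j) : w ∉ hullVertices A := by
  intro hwH
  obtain ⟨j, -, hj, hj1⟩ := exists_mem_Ico_and_not_succ (P := fun j => 0 < det3 (c 0) (c j) w)
    hm ((hedge 0).det3_pos w hw (hwc 0) (hwc 1)) (by simp [hcm, det3_self_left])
  have hedge_j := (hedge j).det3_pos w hw (hwc j) (hwc (j + 1))
  have hc : c (j + 1) ≠ c 0 := by
    intro he
    rw [he, ← det3_rotate, det3_swap_right] at hedge_j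
    linarith
  have hne := hgp _ (hedge 0).left_mem _ (hedge j).right_mem w hw (Ne.symm hc) (hwc 0).symm
    (hwc (j + 1)).symm
  refine hwH.2 ⟨c 0, (hedge 0).left_mem, c j, (hedge j).left_mem, c (j + 1),
    (hedge j).right_mem, ?_, ?_, ?_⟩
  · rwa [← det3_rotate]
  · rwa [← det3_rotate]
  · rw [det3_rotate, det3_swap_right]
    exact neg_pos.2 (lt_of_le_of_ne (not_lt.1 hj1) hne)

lemma mapsTo_hullSucc (hfin : A.Finite) (hgp : GenPos A) (hnt : A.Nontrivial) :
    MapsTo (hullSucc A) (hullVertices A) (hullVertices A) := fun _ hp =>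
  (isHullEdge_hullSucc hfin hgp hnt hp).right_mem_hullVertices

lemma injOn_hullSucc (hfin : A.Finite) (hgp : GenPos A) (hnt : A.Nontrivial) :
    InjOn (hullSucc A) (hullVertices A) := fun _ hp _ hp' he =>
  (isHullEdge_hullSucc hfin hgp hnt hp).eq_of_right (he ▸ isHullEdge_hullSucc hfin hgp hnt hp')

lemma map_mem_hullVertices (hfin : A.Finite) (hgp : GenPos A) (hnt : A.Nontrivial)
    (hbij : BijOn f A A) (hrev : IsOrientationReversing A f) (hp : p ∈ hullVertices A) :
    f p ∈ hullVertices A :=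
  ((isHullEdge_hullSucc hfin hgp hnt hp).map hbij hrev).right_mem_hullVertices

/-- `f` conjugates the successor map on the hull to its inverse. -/
lemma hullSucc_map_hullSucc (hfin : A.Finite) (hgp : GenPos A) (hnt : A.Nontrivial)
    (hbij : BijOn f A A) (hrev : IsOrientationReversing A f) (hp : p ∈ hullVertices A) :
    hullSucc A (f (hullSucc A p)) = f p :=
  have e := (isHullEdge_hullSucc hfin hgp hnt hp).map hbij hrev
  (isHullEdge_hullSucc hfin hgp hnt e.left_mem_hullVertices).eq_of_left e

lemma iterate_hullSucc_map_iterate_hullSucc (hfin : A.Finite) (hgp : GenPos A)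
    (hnt : A.Nontrivial) (hbij : BijOn f A A) (hrev : IsOrientationReversing A f)
    (hp : p ∈ hullVertices A) (n : ℕ) :
    (hullSucc A)^[n] (f ((hullSucc A)^[n] p)) = f p := by
  induction n with
  | zero => rfl
  | succ n ih =>
    have hn := (mapsTo_hullSucc hfin hgp hnt).iterate n hp
    rw [Function.iterate_succ_apply, Function.iterate_succ_apply',
      hullSucc_map_hullSucc hfin hgp hnt hbij hrev hn, ih]

/-- If `f p` were off the boundary cycle through `p`, that cycle would enclose it. -/
lemma exists_iterate_hullSucc_eq_map (hfin : A.Finite) (hgp : GenPos A) (hnt : A.Nontrivial)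
    (hbij : BijOn f A A) (hrev : IsOrientationReversing A f) (hp : p ∈ hullVertices A) :
    ∃ a, (hullSucc A)^[a] p = f p := by
  by_contra! hne
  have hmaps := mapsTo_hullSucc hfin hgp hnt
  obtain ⟨m, hm, hmp⟩ := exists_pos_iterate_eq_self_of_injOn (hfin.subset (sep_subset _ _))
    hmaps (injOn_hullSucc hfin hgp hnt) hp
  refine notMem_hullVertices_of_cycle hgp hm hmp (fun j => ?_) (hbij.mapsTo hp.1)
    (fun j => (hne j).symm) (map_mem_hullVertices hfin hgp hnt hbij hrev hp)
  rw [Function.iterate_succ_apply']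
  exact isHullEdge_hullSucc hfin hgp hnt (hmaps.iterate j hp)

lemma map_map_of_mem_hullVertices (hfin : A.Finite) (hgp : GenPos A) (hnt : A.Nontrivial)
    (hbij : BijOn f A A) (hrev : IsOrientationReversing A f) (hp : p ∈ hullVertices A) :
    f (f p) = p := by
  obtain ⟨a, ha⟩ := exists_iterate_hullSucc_eq_map hfin hgp hnt hbij hrev hp
  have h := iterate_hullSucc_map_iterate_hullSucc hfin hgp hnt hbij hrev hp a
  rw [ha] at h
  have hffp := map_mem_hullVertices hfin hgp hnt hbij hrev
    (map_mem_hullVertices hfin hgp hnt hbij hrev hp)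
  exact (injOn_hullSucc hfin hgp hnt).iterate (mapsTo_hullSucc hfin hgp hnt) a hffp hp
    (h.trans ha.symm)

lemma bijOn_hullVertices (hfin : A.Finite) (hgp : GenPos A) (hnt : A.Nontrivial)
    (hbij : BijOn f A A) (hrev : IsOrientationReversing A f) :
    BijOn f (hullVertices A) (hullVertices A) :=
  ((hfin.subset (sep_subset _ _)).injOn_iff_bijOn_of_mapsTo
    fun _ hp => map_mem_hullVertices hfin hgp hnt hbij hrev hp).1
    (hbij.injOn.mono (sep_subset _ _))

end Hull

section Projection

variable {v p x y z : E3}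

def centralProj (v x : E3) : E3 := ⟪v, x⟫⁻¹ • x

lemma centralProj_ne (hp : 0 < ⟪v, p⟫) (hx : 0 < ⟪v, x⟫) (hpxy : det3 p x y ≠ 0) :
    centralProj v x ≠ centralProj v p := by
  intro he
  have h := det3_smul ⟪v, p⟫⁻¹ ⟪v, x⟫⁻¹ 1 p x y
  rw [← centralProj, ← centralProj, he, det3_self_left] at h
  exact mul_ne_zero (by positivity) hpxy h.symm

lemma centralProj_mem_of_det3_pos {S : Set E3} (hS : Convex ℝ S)
    (hx : 0 < ⟪v, x⟫) (hy : 0 < ⟪v, y⟫) (hz : 0 < ⟪v, z⟫)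
    (hxy : 0 < det3 p x y) (hyz : 0 < det3 p y z) (hzx : 0 < det3 p z x)
    (hxS : centralProj v x ∈ S) (hyS : centralProj v y ∈ S) (hzS : centralProj v z ∈ S) :
    centralProj v p ∈ S := by
  have hcramer := det3_smul_eq x y z p
  rw [← det3_rotate x p z, det3_rotate p x y] at hcramer
  let w : Fin 3 → ℝ := ![det3 p y z * ⟪v, x⟫, det3 p z x * ⟪v, y⟫, det3 p x y * ⟪v, z⟫]
  let u : Fin 3 → E3 := ![centralProj v x, centralProj v y, centralProj v z]
  have hwu : ∑ i, w i • u i = det3 x y z • p := by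
    simp [w, u, Fin.sum_univ_three, centralProj, smul_smul, hx.ne', hy.ne', hz.ne', hcramer]
  have hw : ∑ i, w i = det3 x y z * ⟪v, p⟫ := by
    have := congrArg (inner ℝ v) hcramer
    simp only [inner_add_right, inner_smul_right] at this
    simp [w, Fin.sum_univ_three, this]
  have hw_pos : 0 < ∑ i, w i := by
    simp [w, Fin.sum_univ_three]
    positivity
  have hD : det3 x y z ≠ 0 := by
    rintro hD
    rw [hw, hD, zero_mul] at hw_pos
    exact hw_pos.false
  have hcm : Finset.univ.centerMass w u = centralProj v p := by
    rw [Finset.centerMass, hwu, hw, smul_smul, centralProj, mul_inv_rev, mul_assoc,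
      inv_mul_cancel₀ hD, mul_one]
  rw [← hcm]
  exact hS.centerMass_mem (fun i _ => by fin_cases i <;> simp [w] <;> positivity) hw_pos
    (fun i _ => by fin_cases i <;> assumption)

lemma hullVertices_nonempty {A : Set E3} (hfin : A.Finite) (hv : ∀ p ∈ A, 0 < ⟪v, p⟫)
    (hne : A.Nonempty) : (hullVertices A).Nonempty := by
  set K := convexHull ℝ (centralProj v '' A)
  have hK : K.Nonempty := (convexHull_nonempty_iff (𝕜 := ℝ)).2 (hne.image _)
  obtain ⟨e, he⟩ :=
    ((hfin.image (centralProj v)).isCompact_convexHull ℝ).extremePoints_nonempty hK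
  obtain ⟨p, hp, rfl⟩ := extremePoints_convexHull_subset he
  have hconv := ((convex_convexHull ℝ _).mem_extremePoints_iff_convex_sdiff.1 he).2
  refine ⟨p, hp, fun ⟨x, hx, y, hy, z, hz, hxy, hyz, hzx⟩ => ?_⟩
  have mem : ∀ r ∈ A, centralProj v r ≠ centralProj v p →
      centralProj v r ∈ K \ {centralProj v p} :=
    fun r hr hne => ⟨subset_convexHull ℝ _ (mem_image_of_mem _ hr), hne⟩
  have hpv := hv p hp
  exact (centralProj_mem_of_det3_pos hconv (hv x hx) (hv y hy) (hv z hz) hxy hyz hzx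
    (mem x hx (centralProj_ne hpv (hv x hx) hxy.ne'))
    (mem y hy (centralProj_ne hpv (hv y hy) hyz.ne'))
    (mem z hz (centralProj_ne hpv (hv z hz) hzx.ne'))).2 rfl

end Projection

lemma IsAffineSet.mono {A B : Set E3} (hA : IsAffineSet A) (hBA : B ⊆ A) : IsAffineSet B :=
  let ⟨hfin, hsph, v, hv⟩ := hA
  ⟨hfin.subset hBA, hBA.trans hsph, v, fun p hp => hv p (hBA hp)⟩

lemma GenPos.mono {A B : Set E3} (hA : GenPos A) (hBA : B ⊆ A) : GenPos B :=
  fun p hp q hq r hr => hA p (hBA hp) q (hBA hq) r (hBA hr)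

lemma IsOrientationReversing.mono {A B : Set E3} {f : E3 → E3} (hf : IsOrientationReversing A f)
    (hBA : B ⊆ A) : IsOrientationReversing B f :=
  fun p hp q hq r hr => hf p (hBA hp) q (hBA hq) r (hBA hr)

lemma Set.BijOn.sdiff_of_subset {α : Type*} {f : α → α} {A B : Set α} (hA : BijOn f A A)
    (hB : BijOn f B B) (hBA : B ⊆ A) : BijOn f (A \ B) (A \ B) := by
  have h := (hA.injOn.mono (sdiff_subset (t := B))).bijOn_image
  rwa [hA.injOn.image_sdiff_subset hBA, hA.image_eq, hB.image_eq] at h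

/-- An orientation reversing permutation of a finite affine point set in
general position on the sphere is an involution. -/
theorem stmt2 (A : Set E3) (hA : IsAffineSet A) (hgp : GenPos A)
    (f : E3 → E3) (hbij : Set.BijOn f A A)
    (hrev : ∀ p ∈ A, ∀ q ∈ A, ∀ r ∈ A, sgn3 (f p) (f q) (f r) = -sgn3 p q r) :
    ∀ p ∈ A, f (f p) = p := by
  induction hn : A.ncard using Nat.strong_induction_on generalizing A with
  | _ n ih =>
  intro p hp
  have hfp := hbij.mapsTo hp
  rcases A.subsingleton_or_nontrivial with hsub | hnt
  · rw [hsub hfp hp, hsub hfp hp]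
  by_cases hpH : p ∈ hullVertices A
  · exact map_map_of_mem_hullVertices hA.1 hgp hnt hbij hrev hpH
  set H := hullVertices A
  have hHA : H ⊆ A := sep_subset _ _
  obtain ⟨v, hv⟩ := hA.2.2
  have hlt : (A \ H).ncard < n := hn ▸ ncard_lt_ncard (sdiff_ssubset_left_iff.2 (by
    rw [inter_eq_right.2 hHA]; exact hullVertices_nonempty hA.1 hv ⟨p, hp⟩)) hA.1
  exact ih _ hlt (A \ H) (hA.mono sdiff_subset) (hgp.mono sdiff_subset)
    (hbij.sdiff_of_subset (bijOn_hullVertices hA.1 hgp hnt hbij hrev) hHA)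
    (IsOrientationReversing.mono hrev sdiff_subset) rfl p ⟨hp, hpH⟩
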